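/- Let B ∈ ℂ^{n×n} be Hermitian positive definite and let C ∈ ℂ^{n×n} admit a factorization C = U·diag(Σ₁, Σ₂)·V*, where U ∈ ℂ^{n×n} satisfies U*BU = I, V ∈ ℂ^{n×n} is unitary, Σ₁ ∈ ℂ^{k×k} and Σ₂ ∈ ℂ^{(n−k)×(n−k)} are diagonal with nonnegative real entries. Let Ω ∈ ℂ^{n×(k+p)} and write V*Ω = [Ω₁; Ω₂], where Ω₁ consists of the first k rows and Ω₂ of the remaining n−k rows. Suppose X ∈ ℂ^{(k+p)×k} is a right inverse of Ω₁, i.e., Ω₁X = I_k, and set G = [X 0]·V* ∈ ℂ^{(k+p)×n} (the block [X 0] has X in its first k columns and zeros in the remaining n−k columns). Then ‖C − CΩG‖_B² ≤ ‖B⁻¹‖₂·( ‖Σ₂‖₂² + ‖Σ₂Ω₂X‖₂² ). -/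

import Mathlib

/-!
Since `Uᴴ B U = 1`, the matrix `U` is invertible with `U⁻¹ = Uᴴ B` and `B⁻¹ = U Uᴴ`, and
`‖U z‖_B = ‖z‖₂`; hence the `B`-norm of `M` is the spectral norm of `U⁻¹ M U`.
Because `Ω₁ X = I`, the error factors as `C - C Ω G = U F Vᴴ` with `F = [[0, 0], [-Σ₂Ω₂X, Σ₂]]`.
Therefore `‖C - C Ω G‖_B = ‖F Vᴴ U‖₂ ≤ ‖F‖₂ ‖U‖₂`, where `‖U‖₂² = ‖U Uᴴ‖₂ = ‖B⁻¹‖₂` and, by the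
C*-identity applied to the block row `[-Σ₂Ω₂X  Σ₂]`, `‖F‖₂² ≤ ‖Σ₂Ω₂X‖₂² + ‖Σ₂‖₂²`.
-/

open Matrix ComplexOrder

noncomputable section

/-- Euclidean (ℓ²) norm of a complex vector. -/
def vecNorm2 {m : Type*} [Fintype m] (x : m → ℂ) : ℝ :=
  Real.sqrt (∑ i, ‖x i‖ ^ 2)

/-- Spectral (ℓ²-operator) norm of a complex matrix. -/
def specNorm {m p : Type*} [Fintype m] [Fintype p] (M : Matrix m p ℂ) : ℝ :=
  sSup {t : ℝ | ∃ x : p → ℂ, x ≠ 0 ∧ t = vecNorm2 (M *ᵥ x) / vecNorm2 x}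

/-- The B-inner product ⟨x,y⟩_B = y*Bx. -/
def Binner {m : Type*} [Fintype m] (B : Matrix m m ℂ) (x y : m → ℂ) : ℂ :=
  star y ⬝ᵥ B *ᵥ x

/-- The B-norm of a vector, ‖x‖_B = √(x*Bx). -/
def vecBnorm {m : Type*} [Fintype m] (B : Matrix m m ℂ) (x : m → ℂ) : ℝ :=
  Real.sqrt (star x ⬝ᵥ B *ᵥ x).re

/-- The induced B-norm of a matrix, ‖M‖_B = sup_{x ≠ 0} ‖Mx‖_B / ‖x‖_B. -/
def matBnorm {m : Type*} [Fintype m] (B M : Matrix m m ℂ) : ℝ :=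
  sSup {t : ℝ | ∃ x : m → ℂ, x ≠ 0 ∧ t = vecBnorm B (M *ᵥ x) / vecBnorm B x}

open scoped Matrix.Norms.L2Operator

section Norms

variable {m n : Type*} [Fintype m] [Fintype n]

lemma vecNorm2_eq_norm (x : m → ℂ) : vecNorm2 x = ‖WithLp.toLp 2 x‖ := by
  rw [EuclideanSpace.norm_eq]
  rfl

lemma specNorm_eq_l2_opNorm [DecidableEq n] (M : Matrix m n ℂ) : specNorm M = ‖M‖ := by
  have ratio_le : ∀ x : n → ℂ, vecNorm2 (M *ᵥ x) / vecNorm2 x ≤ ‖M‖ := fun x => by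
    rw [vecNorm2_eq_norm, vecNorm2_eq_norm]
    exact div_le_of_le_mul₀ (norm_nonneg _) (norm_nonneg _) (M.l2_opNorm_mulVec _)
  have hbdd : BddAbove {t : ℝ | ∃ x : n → ℂ, x ≠ 0 ∧ t = vecNorm2 (M *ᵥ x) / vecNorm2 x} :=
    ⟨‖M‖, by rintro t ⟨x, -, rfl⟩; exact ratio_le x⟩
  refine le_antisymm (Real.sSup_le (by rintro t ⟨x, -, rfl⟩; exact ratio_le x) (norm_nonneg M)) ?_
  rw [l2_opNorm_def]
  refine ContinuousLinearMap.opNorm_le_bound _ (Real.sSup_nonneg ?_) fun x => ?_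
  · rintro t ⟨x, -, rfl⟩
    rw [vecNorm2_eq_norm, vecNorm2_eq_norm]
    positivity
  rcases eq_or_ne x 0 with rfl | hx
  · simp
  have hx' : x.ofLp ≠ 0 := by simpa using hx
  have hratio : vecNorm2 (M *ᵥ x.ofLp) / vecNorm2 x.ofLp ≤ specNorm M :=
    le_csSup hbdd ⟨x.ofLp, hx', rfl⟩
  rw [vecNorm2_eq_norm, vecNorm2_eq_norm, WithLp.toLp_ofLp, div_le_iff₀ (norm_pos_iff.mpr hx)]
    at hratio
  exact hratio

end Norms

section BOrthonormal

variable {m : Type*} [Fintype m] [DecidableEq m] {B U : Matrix m m ℂ}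

lemma vecBnorm_mulVec (hU : Uᴴ * B * U = 1) (z : m → ℂ) :
    vecBnorm B (U *ᵥ z) = vecNorm2 z := by
  have hform : star (U *ᵥ z) ⬝ᵥ B *ᵥ (U *ᵥ z) = star z ⬝ᵥ z := by
    rw [star_mulVec, dotProduct_mulVec, vecMul_vecMul, dotProduct_mulVec, vecMul_vecMul, hU,
      vecMul_one]
  rw [vecBnorm, hform, vecNorm2_eq_norm, ← Real.sqrt_sq (norm_nonneg _),
    ← inner_self_eq_norm_sq (𝕜 := ℂ), EuclideanSpace.inner_eq_star_dotProduct, dotProduct_comm]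
  rfl

lemma inv_eq_of_conjTranspose_mul_mul_eq_one (hU : Uᴴ * B * U = 1) : U⁻¹ = Uᴴ * B :=
  inv_eq_left_inv hU

lemma mul_inv_of_conjTranspose_mul_mul_eq_one (hU : Uᴴ * B * U = 1) : U * U⁻¹ = 1 := by
  rw [inv_eq_of_conjTranspose_mul_mul_eq_one hU]
  exact mul_eq_one_comm.mp hU

lemma inv_eq_mul_conjTranspose (hU : Uᴴ * B * U = 1) : B⁻¹ = U * Uᴴ := by
  refine inv_eq_left_inv ?_
  rw [mul_assoc, ← inv_eq_of_conjTranspose_mul_mul_eq_one hU,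
    mul_inv_of_conjTranspose_mul_mul_eq_one hU]

lemma matBnorm_eq_specNorm (hU : Uᴴ * B * U = 1) (M : Matrix m m ℂ) :
    matBnorm B M = specNorm (U⁻¹ * M * U) := by
  have hUU : U * U⁻¹ = 1 := mul_inv_of_conjTranspose_mul_mul_eq_one hU
  have hUU' : U⁻¹ * U = 1 := mul_eq_one_comm.mp hUU
  have hMU : M * U = U * (U⁻¹ * M * U) := by rw [← mul_assoc, ← mul_assoc, hUU, one_mul]
  have ratio_eq : ∀ z, vecBnorm B (M *ᵥ (U *ᵥ z)) / vecBnorm B (U *ᵥ z)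
      = vecNorm2 ((U⁻¹ * M * U) *ᵥ z) / vecNorm2 z := fun z => by
    rw [mulVec_mulVec, hMU, ← mulVec_mulVec, vecBnorm_mulVec hU, vecBnorm_mulVec hU]
  unfold matBnorm specNorm
  congr 1
  ext t
  constructor
  · rintro ⟨x, hx, rfl⟩
    have hUx : U *ᵥ (U⁻¹ *ᵥ x) = x := by rw [mulVec_mulVec, hUU, one_mulVec]
    refine ⟨U⁻¹ *ᵥ x, fun h => hx ?_, ?_⟩
    · rw [← hUx, h, mulVec_zero]
    · rw [← ratio_eq, hUx]
  · rintro ⟨z, hz, rfl⟩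
    refine ⟨U *ᵥ z, fun h => hz ?_, (ratio_eq z).symm⟩
    rw [← one_mulVec z, ← hUU', ← mulVec_mulVec, h, mulVec_zero]

end BOrthonormal

section Blocks

variable {m m' n n₁ n₂ : Type*} [Fintype m] [Fintype m'] [Fintype n] [Fintype n₁] [Fintype n₂]
  [DecidableEq n] [DecidableEq n₁] [DecidableEq n₂]

lemma l2_opNorm_sq_eq_mul_conjTranspose [DecidableEq m] (A : Matrix m n ℂ) :
    ‖A‖ ^ 2 = ‖A * Aᴴ‖ := by
  rw [← l2_opNorm_conjTranspose A, sq, ← l2_opNorm_conjTranspose_mul_self,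
    conjTranspose_conjTranspose]

lemma l2_opNorm_fromRows_zero (M : Matrix m n ℂ) :
    ‖fromRows (0 : Matrix m' n ℂ) M‖ = ‖M‖ := by
  refine (mul_self_inj (norm_nonneg _) (norm_nonneg _)).mp ?_
  rw [← l2_opNorm_conjTranspose_mul_self, ← l2_opNorm_conjTranspose_mul_self,
    conjTranspose_fromRows_eq_fromCols_conjTranspose, fromCols_mul_fromRows]
  simp

lemma l2_opNorm_fromCols_sq_le [DecidableEq m] (A : Matrix m n₁ ℂ) (D : Matrix m n₂ ℂ) :
    ‖fromCols A D‖ ^ 2 ≤ ‖A‖ ^ 2 + ‖D‖ ^ 2 := by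
  rw [l2_opNorm_sq_eq_mul_conjTranspose, conjTranspose_fromCols_eq_fromRows_conjTranspose,
    fromCols_mul_fromRows, l2_opNorm_sq_eq_mul_conjTranspose A,
    l2_opNorm_sq_eq_mul_conjTranspose D]
  exact norm_add_le _ _

lemma l2_opNorm_fromBlocks_zero_zero_sq_le [DecidableEq m] (A : Matrix m n₁ ℂ)
    (D : Matrix m n₂ ℂ) :
    ‖fromBlocks (0 : Matrix m' n₁ ℂ) 0 A D‖ ^ 2 ≤ ‖A‖ ^ 2 + ‖D‖ ^ 2 := by
  rw [← fromRows_fromCols_eq_fromBlocks, fromCols_zero, l2_opNorm_fromRows_zero]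
  exact l2_opNorm_fromCols_sq_le A D

end Blocks

lemma fromBlocks_sub_mul_fromRows_mul_fromCols_zero {R k m p : Type*} [Ring R] [Fintype k]
    [Fintype m] [Fintype p] [DecidableEq k] (S₁ : Matrix k k R) (S₂ : Matrix m m R)
    (Ω₁ : Matrix k p R) (Ω₂ : Matrix m p R) (X : Matrix p k R) (hX : Ω₁ * X = 1) :
    fromBlocks S₁ 0 0 S₂ - fromBlocks S₁ 0 0 S₂ * fromRows Ω₁ Ω₂ * fromCols X (0 : Matrix p m R)
      = fromBlocks 0 0 (-(S₂ * Ω₂ * X)) S₂ := by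
  rw [Matrix.mul_assoc, fromRows_mul_fromCols, hX, fromBlocks_multiply]
  ext (i | i) (j | j) <;> simp [Matrix.mul_assoc]

theorem statement12_general {k m p : ℕ}
    (B : Matrix (Fin k ⊕ Fin m) (Fin k ⊕ Fin m) ℂ)
    (U V C : Matrix (Fin k ⊕ Fin m) (Fin k ⊕ Fin m) ℂ)
    (hU : Uᴴ * B * U = 1) (hV : V ∈ Matrix.unitaryGroup (Fin k ⊕ Fin m) ℂ)
    (σ₁ : Fin k → ℝ) (σ₂ : Fin m → ℝ)
    (hC : C = U * Matrix.fromBlocks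
        (Matrix.diagonal fun i => (σ₁ i : ℂ)) 0 0
        (Matrix.diagonal fun i => (σ₂ i : ℂ)) * Vᴴ)
    (Ω : Matrix (Fin k ⊕ Fin m) (Fin (k + p)) ℂ)
    (Ω₁ : Matrix (Fin k) (Fin (k + p)) ℂ) (Ω₂ : Matrix (Fin m) (Fin (k + p)) ℂ)
    (hΩ₁ : Ω₁ = (Vᴴ * Ω).submatrix Sum.inl id)
    (hΩ₂ : Ω₂ = (Vᴴ * Ω).submatrix Sum.inr id)
    (X : Matrix (Fin (k + p)) (Fin k) ℂ) (hX : Ω₁ * X = 1)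
    (G : Matrix (Fin (k + p)) (Fin k ⊕ Fin m) ℂ)
    (hG : G = (Matrix.of fun i j => Sum.elim (fun a => X i a) (fun _ => (0 : ℂ)) j) * Vᴴ) :
    matBnorm B (C - C * Ω * G) ^ 2 ≤
      specNorm B⁻¹ *
        (specNorm (Matrix.diagonal fun i => (σ₂ i : ℂ)) ^ 2 +
          specNorm ((Matrix.diagonal fun i => (σ₂ i : ℂ)) * Ω₂ * X) ^ 2) := by
  set S₂ : Matrix (Fin m) (Fin m) ℂ := diagonal fun i => (σ₂ i : ℂ)
  set F := fromBlocks (0 : Matrix (Fin k) (Fin k) ℂ) 0 (-(S₂ * Ω₂ * X)) S₂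
  have hVΩ : Vᴴ * Ω = fromRows Ω₁ Ω₂ := by
    ext (i | i) j <;> simp [hΩ₁, hΩ₂]
  have hE : C - C * Ω * G = U * F * Vᴴ := by
    have hXG : (of fun i j => Sum.elim (fun a => X i a) (fun _ => (0 : ℂ)) j :
        Matrix (Fin (k + p)) (Fin k ⊕ Fin m) ℂ) = fromCols X 0 := by
      ext i (j | j) <;> rfl
    have hF : F = fromBlocks (diagonal fun i => (σ₁ i : ℂ)) 0 0 S₂
        - fromBlocks (diagonal fun i => (σ₁ i : ℂ)) 0 0 S₂ * (Vᴴ * Ω) * fromCols X 0 := by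
      rw [hVΩ, fromBlocks_sub_mul_fromRows_mul_fromCols_zero _ S₂ Ω₁ Ω₂ X hX]
    rw [hF, hC, hG, hXG]
    simp only [Matrix.mul_sub, Matrix.sub_mul, Matrix.mul_assoc]
    rfl
  have hUU : U⁻¹ * U = 1 := mul_eq_one_comm.mp (mul_inv_of_conjTranspose_mul_mul_eq_one hU)
  rw [matBnorm_eq_specNorm hU, specNorm_eq_l2_opNorm, specNorm_eq_l2_opNorm,
    specNorm_eq_l2_opNorm, specNorm_eq_l2_opNorm, inv_eq_mul_conjTranspose hU, hE]
  calc ‖U⁻¹ * (U * F * Vᴴ) * U‖ ^ 2 = ‖F * Vᴴ * U‖ ^ 2 := by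
        simp only [← mul_assoc, hUU, one_mul]
    _ ≤ (‖F * Vᴴ‖ * ‖U‖) ^ 2 := by gcongr; exact norm_mul_le _ _
    _ = ‖U * Uᴴ‖ * ‖F‖ ^ 2 := by
        rw [← star_eq_conjTranspose, CStarRing.norm_mul_mem_unitary F (Unitary.star_mem hV),
          mul_pow, mul_comm, l2_opNorm_sq_eq_mul_conjTranspose]
    _ ≤ ‖U * Uᴴ‖ * (‖S₂‖ ^ 2 + ‖S₂ * Ω₂ * X‖ ^ 2) := by
        rw [add_comm, ← norm_neg (S₂ * Ω₂ * X)]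
        gcongr
        exact l2_opNorm_fromBlocks_zero_zero_sq_le _ _

/-- deterministic bound ‖C − CΩG‖_B² ≤ ‖B⁻¹‖₂(‖Σ₂‖₂² + ‖Σ₂Ω₂X‖₂²),
    where C = U·diag(Σ₁,Σ₂)·V*, U*BU = I, V unitary, Ω₁X = I_k and G = [X 0]V*.
    The index set of size n is realized as `Fin k ⊕ Fin m` (n = k + m). -/
theorem statement12 {k m p : ℕ}
    (B : Matrix (Fin k ⊕ Fin m) (Fin k ⊕ Fin m) ℂ) (hB : B.PosDef)
    (U V C : Matrix (Fin k ⊕ Fin m) (Fin k ⊕ Fin m) ℂ)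
    (hU : Uᴴ * B * U = 1) (hV : V ∈ Matrix.unitaryGroup (Fin k ⊕ Fin m) ℂ)
    (σ₁ : Fin k → ℝ) (σ₂ : Fin m → ℝ) (hσ₁ : ∀ i, 0 ≤ σ₁ i) (hσ₂ : ∀ i, 0 ≤ σ₂ i)
    (hC : C = U * Matrix.fromBlocks
        (Matrix.diagonal fun i => (σ₁ i : ℂ)) 0 0
        (Matrix.diagonal fun i => (σ₂ i : ℂ)) * Vᴴ)
    (Ω : Matrix (Fin k ⊕ Fin m) (Fin (k + p)) ℂ)
    (Ω₁ : Matrix (Fin k) (Fin (k + p)) ℂ) (Ω₂ : Matrix (Fin m) (Fin (k + p)) ℂ)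
    (hΩ₁ : Ω₁ = (Vᴴ * Ω).submatrix Sum.inl id)
    (hΩ₂ : Ω₂ = (Vᴴ * Ω).submatrix Sum.inr id)
    (X : Matrix (Fin (k + p)) (Fin k) ℂ) (hX : Ω₁ * X = 1)
    (G : Matrix (Fin (k + p)) (Fin k ⊕ Fin m) ℂ)
    (hG : G = (Matrix.of fun i j => Sum.elim (fun a => X i a) (fun _ => (0 : ℂ)) j) * Vᴴ) :
    matBnorm B (C - C * Ω * G) ^ 2 ≤
      specNorm B⁻¹ *
        (specNorm (Matrix.diagonal fun i => (σ₂ i : ℂ)) ^ 2 +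
          specNorm ((Matrix.diagonal fun i => (σ₂ i : ℂ)) * Ω₂ * X) ^ 2) :=
  statement12_general B U V C hU hV σ₁ σ₂ hC Ω Ω₁ Ω₂ hΩ₁ hΩ₂ X hX G hG
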